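/- If U^n, V^n ∈ ℝ^{dN} satisfy the discrete variational equations (I_N ⊗ K)·(W^{n+1} − W^n)/Δt + (D_h ⊗ M)·W^{n+1/2} = H·W^{n+1/2} with W^{n+1/2} = (W^{n+1}+W^n)/2, H symmetric, and D_h skew-symmetric, then ⟨(I_N ⊗ K)·U^{n+1}, V^{n+1}⟩ = ⟨(I_N ⊗ K)·U^n, V^n⟩. -/

import Mathlib

/-!
Write `ū = (u' + u)/2` for the midpoint of a step `u ↦ u'`. For every matrix `A`,
`⟪A u', v'⟫ - ⟪A u, v⟫ = ⟪A (u' - u), v̄⟫ + ⟪A ū, v' - v⟫`. The scheme says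
`A (w' - w) = S w̄` with `A = I_N ⊗ K` and `S = Δt (H - D_h ⊗ M)`; `A` is skew and `S` is
symmetric (a Kronecker product of two skew matrices is symmetric), so the right-hand side
becomes `⟪S ū, v̄⟫ - ⟪ū, S v̄⟫ = 0`.
-/

open Matrix
open scoped Kronecker

namespace Matrix

variable {R : Type*} {l m n p : Type*}

theorem transpose_kronecker [Mul R] (A : Matrix l m R) (B : Matrix n p R) :
    (A ⊗ₖ B)ᵀ = Aᵀ ⊗ₖ Bᵀ :=
  kroneckerMap_transpose _ A B

theorem neg_kronecker [Ring R] (A : Matrix l m R) (B : Matrix n p R) :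
    (-A) ⊗ₖ B = -(A ⊗ₖ B) := by
  ext
  exact neg_mul _ _

theorem kronecker_neg [Ring R] (A : Matrix l m R) (B : Matrix n p R) :
    A ⊗ₖ (-B) = -(A ⊗ₖ B) := by
  ext
  exact mul_neg _ _

variable [Fintype m]

theorem mulVec_dotProduct_of_transpose_eq_neg [CommRing R] {A : Matrix m m R} (hA : Aᵀ = -A)
    (u w : m → R) : A *ᵥ u ⬝ᵥ w = -(u ⬝ᵥ A *ᵥ w) := by
  rw [← dotProduct_neg, ← neg_mulVec, ← hA, dotProduct_mulVec, vecMul_transpose]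

theorem mulVec_dotProduct_of_transpose_eq [CommSemiring R] {S : Matrix m m R} (hS : Sᵀ = S)
    (u w : m → R) : S *ᵥ u ⬝ᵥ w = u ⬝ᵥ S *ᵥ w := by
  conv_rhs => rw [← hS, dotProduct_mulVec, vecMul_transpose]

variable [Field R]

theorem mulVec_dotProduct_sub_mulVec_dotProduct [CharZero R] (A : Matrix m m R)
    (u u' v v' : m → R) :
    A *ᵥ u' ⬝ᵥ v' - A *ᵥ u ⬝ᵥ v =
      A *ᵥ (u' - u) ⬝ᵥ (1 / 2 : R) • (v' + v) + A *ᵥ ((1 / 2 : R) • (u' + u)) ⬝ᵥ (v' - v) := by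
  simp only [mulVec_sub, mulVec_add, mulVec_smul, sub_dotProduct, add_dotProduct,
    dotProduct_sub, dotProduct_add, smul_dotProduct, dotProduct_smul, smul_eq_mul]
  ring

theorem mulVec_sub_eq_of_midpoint_step {A B H : Matrix m m R} {τ : R} (hτ : τ ≠ 0)
    {w w' : m → R}
    (h : A *ᵥ (τ⁻¹ • (w' - w)) + B *ᵥ ((1 / 2 : R) • (w' + w)) =
      H *ᵥ ((1 / 2 : R) • (w' + w))) :
    A *ᵥ (w' - w) = (τ • (H - B)) *ᵥ ((1 / 2 : R) • (w' + w)) := by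
  rw [smul_mulVec, sub_mulVec, ← eq_sub_of_add_eq h, mulVec_smul, smul_smul,
    mul_inv_cancel₀ hτ, one_smul]

theorem mulVec_dotProduct_eq_of_midpoint_step [CharZero R] {A S : Matrix m m R}
    (hA : Aᵀ = -A) (hS : Sᵀ = S) {u u' v v' : m → R}
    (hu : A *ᵥ (u' - u) = S *ᵥ ((1 / 2 : R) • (u' + u)))
    (hv : A *ᵥ (v' - v) = S *ᵥ ((1 / 2 : R) • (v' + v))) :
    A *ᵥ u' ⬝ᵥ v' = A *ᵥ u ⬝ᵥ v := by
  rw [← sub_eq_zero, mulVec_dotProduct_sub_mulVec_dotProduct, hu,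
    mulVec_dotProduct_of_transpose_eq_neg hA, hv, mulVec_dotProduct_of_transpose_eq hS,
    add_neg_cancel]

end Matrix

theorem stmt12_general (N d : ℕ) (Δt : ℝ) (hΔt : 0 < Δt)
    (K M : Matrix (Fin d) (Fin d) ℝ)
    (hK : Kᵀ = -K) (hM : Mᵀ = -M)
    (Dh : Matrix (Fin N) (Fin N) ℝ) (hDh : Dhᵀ = -Dh)
    (H : Matrix (Fin N × Fin d) (Fin N × Fin d) ℝ) (hH : Hᵀ = H)
    (U V : ℕ → (Fin N × Fin d → ℝ))
    (hU : ∀ n,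
      ((1 : Matrix (Fin N) (Fin N) ℝ) ⊗ₖ K) *ᵥ ((Δt)⁻¹ • (U (n+1) - U n))
        + (Dh ⊗ₖ M) *ᵥ ((1/2 : ℝ) • (U (n+1) + U n))
      = H *ᵥ ((1/2 : ℝ) • (U (n+1) + U n)))
    (hV : ∀ n,
      ((1 : Matrix (Fin N) (Fin N) ℝ) ⊗ₖ K) *ᵥ ((Δt)⁻¹ • (V (n+1) - V n))
        + (Dh ⊗ₖ M) *ᵥ ((1/2 : ℝ) • (V (n+1) + V n))
      = H *ᵥ ((1/2 : ℝ) • (V (n+1) + V n))) :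
    ∀ n, (((1 : Matrix (Fin N) (Fin N) ℝ) ⊗ₖ K) *ᵥ U (n+1)) ⬝ᵥ V (n+1)
       = (((1 : Matrix (Fin N) (Fin N) ℝ) ⊗ₖ K) *ᵥ U n) ⬝ᵥ V n := by
  intro n
  have hA : ((1 : Matrix (Fin N) (Fin N) ℝ) ⊗ₖ K)ᵀ =
      -((1 : Matrix (Fin N) (Fin N) ℝ) ⊗ₖ K) := by
    rw [transpose_kronecker, transpose_one, hK, kronecker_neg]
  have hS : (Δt • (H - Dh ⊗ₖ M))ᵀ = Δt • (H - Dh ⊗ₖ M) := by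
    rw [transpose_smul, transpose_sub, hH, transpose_kronecker, hDh, hM, neg_kronecker,
      kronecker_neg, neg_neg]
  exact mulVec_dotProduct_eq_of_midpoint_step hA hS
    (mulVec_sub_eq_of_midpoint_step hΔt.ne' (hU n))
    (mulVec_sub_eq_of_midpoint_step hΔt.ne' (hV n))

/-- Fully discrete conservation of symplecticity for the implicit midpoint
discretization: if `U^n`, `V^n` satisfy
`(I_N ⊗ K)(W^{n+1} − W^n)/Δt + (D_h ⊗ M) W^{n+1/2} = H W^{n+1/2}`
with `H` symmetric and `D_h` skew-symmetric, then
`⟨(I_N ⊗ K) U^{n+1}, V^{n+1}⟩ = ⟨(I_N ⊗ K) U^n, V^n⟩`. -/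
theorem stmt12 (N d : ℕ) (hN : 1 ≤ N) (hd : 1 ≤ d) (Δt : ℝ) (hΔt : 0 < Δt)
    (K M : Matrix (Fin d) (Fin d) ℝ)
    (hK : Kᵀ = -K) (hM : Mᵀ = -M)
    (Dh : Matrix (Fin N) (Fin N) ℝ) (hDh : Dhᵀ = -Dh)
    (H : Matrix (Fin N × Fin d) (Fin N × Fin d) ℝ) (hH : Hᵀ = H)
    (U V : ℕ → (Fin N × Fin d → ℝ))
    (hU : ∀ n,
      ((1 : Matrix (Fin N) (Fin N) ℝ) ⊗ₖ K) *ᵥ ((Δt)⁻¹ • (U (n+1) - U n))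
        + (Dh ⊗ₖ M) *ᵥ ((1/2 : ℝ) • (U (n+1) + U n))
      = H *ᵥ ((1/2 : ℝ) • (U (n+1) + U n)))
    (hV : ∀ n,
      ((1 : Matrix (Fin N) (Fin N) ℝ) ⊗ₖ K) *ᵥ ((Δt)⁻¹ • (V (n+1) - V n))
        + (Dh ⊗ₖ M) *ᵥ ((1/2 : ℝ) • (V (n+1) + V n))
      = H *ᵥ ((1/2 : ℝ) • (V (n+1) + V n))) :
    ∀ n, (((1 : Matrix (Fin N) (Fin N) ℝ) ⊗ₖ K) *ᵥ U (n+1)) ⬝ᵥ V (n+1)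
       = (((1 : Matrix (Fin N) (Fin N) ℝ) ⊗ₖ K) *ᵥ U n) ⬝ᵥ V n :=
  stmt12_general N d Δt hΔt K M hK hM Dh hDh H hH U V hU hV
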